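/- Let 𝒜 be a real or complex Banach algebra and A, B ∈ 𝒜, and let ε be a scalar. Then the family of terms (ε^k / k!) · A^{k−α} · B · (A+B)^{α−1}, indexed by pairs (k, α) with 1 ≤ α ≤ k, is summable, and exp(ε(A+B)) = exp(εA) + Σ_{α=1}^{∞} Σ_{k=α}^{∞} (ε^k / k!) · A^{k−α} · B · (A+B)^{α−1}. -/

import Mathlib

/-!
Expanding both exponentials, `exp(ε(A+B)) - exp(εA) = ∑ₙ (εⁿ/n!) ((A+B)ⁿ - Aⁿ)`, and the
noncommutative telescoping identity `(A+B)ⁿ⁺¹ - Aⁿ⁺¹ = ∑_{i+j=n} Aʲ B (A+B)ⁱ` splits the `n`-th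
term into the `n`-th antidiagonal of the family indexed by `(i, j) = (α - 1, k - α)`.
Since `i! j! ≤ (i+j+1)!`, that family is dominated by `‖ε‖ ‖B‖` times the product of the
exponential series of `‖ε‖ ‖A+B‖` and `‖ε‖ ‖A‖`, so it is absolutely summable and may be
regrouped both by antidiagonals and as the iterated sum over `α` and `k`.
-/

open Finset
open scoped Nat

theorem HasSum.sum_antidiagonal {α M : Type*} [AddCommMonoid α] [TopologicalSpace α]
    [ContinuousAdd α] [RegularSpace α] [AddCommMonoid M] [HasAntidiagonal M] {f : M × M → α}
    {a : α} (h : HasSum f a) : HasSum (fun n ↦ ∑ p ∈ antidiagonal n, f p) a :=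
  (HasAntidiagonal.sigmaAntidiagonalEquivProd.hasSum_iff.mpr h).sigma fun n ↦
    (antidiagonal n).hasSum f

theorem tsum_subtype_nat_le_eq_tsum_add {α : Type*} [AddCommMonoid α] [TopologicalSpace α]
    (f : ℕ → α) (n : ℕ) : ∑' k : {k : ℕ // n ≤ k}, f k = ∑' j, f (j + n) :=
  (Equiv.tsum_eq
    { toFun := fun j ↦ (⟨j + n, le_add_self⟩ : {k : ℕ // n ≤ k})
      invFun := fun k ↦ k.1 - n
      left_inv := fun j ↦ Nat.add_sub_cancel j n
      right_inv := fun k ↦ Subtype.ext (Nat.sub_add_cancel k.2) } _).symm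

theorem add_pow_succ_sub_pow_succ {R : Type*} [Ring R] (a b : R) (n : ℕ) :
    (a + b) ^ (n + 1) - a ^ (n + 1) = ∑ p ∈ antidiagonal n, a ^ p.2 * b * (a + b) ^ p.1 := by
  induction n with
  | zero => simp
  | succ n ih =>
    simp only [Nat.sum_antidiagonal_succ', pow_succ' a, mul_assoc a, ← mul_sum]
    rw [← ih, pow_zero, one_mul, pow_succ' (a + b) (n + 1), pow_succ' a n]
    noncomm_ring

theorem norm_pow_mul_le {R : Type*} [SeminormedRing R] (a b : R) (n : ℕ) :
    ‖a ^ n * b‖ ≤ ‖a‖ ^ n * ‖b‖ := by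
  induction n with
  | zero => simp
  | succ n ih =>
    calc ‖a ^ (n + 1) * b‖ = ‖a * (a ^ n * b)‖ := by rw [pow_succ', mul_assoc]
      _ ≤ ‖a‖ * (‖a‖ ^ n * ‖b‖) := (norm_mul_le _ _).trans (by gcongr)
      _ = ‖a‖ ^ (n + 1) * ‖b‖ := by ring

theorem norm_mul_pow_le {R : Type*} [SeminormedRing R] (a b : R) (n : ℕ) :
    ‖a * b ^ n‖ ≤ ‖a‖ * ‖b‖ ^ n := by
  induction n with
  | zero => simp
  | succ n ih =>
    calc ‖a * b ^ (n + 1)‖ = ‖a * b ^ n * b‖ := by rw [pow_succ, mul_assoc]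
      _ ≤ ‖a‖ * ‖b‖ ^ n * ‖b‖ := (norm_mul_le _ _).trans (by gcongr)
      _ = ‖a‖ * ‖b‖ ^ (n + 1) := by ring

theorem pow_div_factorial_add_succ_le {r : ℝ} (hr : 0 ≤ r) (i j : ℕ) :
    r ^ (j + (i + 1)) / (j + (i + 1))! ≤ r * (r ^ i / i !) * (r ^ j / j !) := by
  have hfac : (i ! * j ! : ℝ) ≤ (j + (i + 1))! := by
    have hdvd := Nat.factorial_mul_factorial_dvd_factorial_add i j
    exact_mod_cast (Nat.le_of_dvd (Nat.factorial_pos _) hdvd).trans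
      (Nat.factorial_le (show i + j ≤ j + (i + 1) by omega))
  calc r ^ (j + (i + 1)) / (j + (i + 1))! ≤ r ^ (j + (i + 1)) / (i ! * j !) := by
        gcongr
    _ = r * (r ^ i / i !) * (r ^ j / j !) := by
        field_simp
        ring

section Groebner

variable {𝕜 : Type*} [RCLike 𝕜] {𝒜 : Type*} [NormedRing 𝒜] [NormedAlgebra 𝕜 𝒜]

/-- The term of index `(k, α)`; the reindexing `(i, j) = (α - 1, k - α)` used below avoids the
truncated subtractions, which are only meaningful for `1 ≤ α ≤ k`. -/
def groebnerTerm (ε : 𝕜) (A B : 𝒜) (k α : ℕ) : 𝒜 :=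
  (ε ^ k / (k ! : 𝕜)) • (A ^ (k - α) * B * (A + B) ^ (α - 1))

variable (ε : 𝕜) (A B : 𝒜)

theorem groebnerTerm_add_succ (i j : ℕ) :
    groebnerTerm ε A B (j + (i + 1)) (i + 1) =
      (ε ^ (j + (i + 1)) / ((j + (i + 1))! : 𝕜)) • (A ^ j * B * (A + B) ^ i) := by
  simp only [groebnerTerm, Nat.add_sub_cancel]

theorem norm_groebnerTerm_add_succ_le (i j : ℕ) :
    ‖groebnerTerm ε A B (j + (i + 1)) (i + 1)‖ ≤
      ‖ε‖ * ‖B‖ * ((‖ε‖ * ‖A + B‖) ^ i / i !) * ((‖ε‖ * ‖A‖) ^ j / j !) := by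
  have hprod : ‖A ^ j * B * (A + B) ^ i‖ ≤ ‖A‖ ^ j * ‖B‖ * ‖A + B‖ ^ i :=
    (norm_mul_pow_le _ _ i).trans (by gcongr; exact norm_pow_mul_le A B j)
  rw [groebnerTerm_add_succ, norm_smul, norm_div, norm_pow, RCLike.norm_natCast]
  calc ‖ε‖ ^ (j + (i + 1)) / ((j + (i + 1))! : ℝ) * ‖A ^ j * B * (A + B) ^ i‖
      ≤ ‖ε‖ * (‖ε‖ ^ i / i !) * (‖ε‖ ^ j / j !) * (‖A‖ ^ j * ‖B‖ * ‖A + B‖ ^ i) := by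
        gcongr
        exact pow_div_factorial_add_succ_le (norm_nonneg ε) i j
    _ = ‖ε‖ * ‖B‖ * ((‖ε‖ * ‖A + B‖) ^ i / i !) * ((‖ε‖ * ‖A‖) ^ j / j !) := by
        ring

theorem summable_groebnerTerm_add_succ [CompleteSpace 𝒜] :
    Summable fun p : ℕ × ℕ ↦ groebnerTerm ε A B (p.2 + (p.1 + 1)) (p.1 + 1) := by
  have hmajorant := ((Real.summable_pow_div_factorial (‖ε‖ * ‖A + B‖)).mul_of_nonneg
      (Real.summable_pow_div_factorial (‖ε‖ * ‖A‖)) (fun _ ↦ by positivity)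
      (fun _ ↦ by positivity)).mul_left (‖ε‖ * ‖B‖)
  refine Summable.of_norm_bounded hmajorant fun p ↦ ?_
  simpa only [mul_assoc] using norm_groebnerTerm_add_succ_le ε A B p.1 p.2

theorem sum_antidiagonal_groebnerTerm_add_succ (n : ℕ) :
    ∑ p ∈ antidiagonal n, groebnerTerm ε A B (p.2 + (p.1 + 1)) (p.1 + 1) =
      (ε ^ (n + 1) / ((n + 1)! : 𝕜)) • ((A + B) ^ (n + 1) - A ^ (n + 1)) := by
  rw [add_pow_succ_sub_pow_succ, smul_sum]
  refine sum_congr rfl fun p hp ↦ ?_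
  have hk : p.2 + (p.1 + 1) = n + 1 := by rw [HasAntidiagonal.mem_antidiagonal] at hp; omega
  rw [groebnerTerm_add_succ, hk]

theorem hasSum_pow_div_factorial_smul_pow (C : 𝒜) [CompleteSpace 𝒜] :
    HasSum (fun n ↦ (ε ^ n / (n ! : 𝕜)) • C ^ n) (NormedSpace.exp (ε • C)) := by
  simpa only [smul_pow, smul_smul, div_eq_inv_mul] using
    NormedSpace.exp_series_hasSum_exp' (𝕂 := 𝕜) (ε • C)

theorem hasSum_groebnerTerm_add_succ [CompleteSpace 𝒜] :
    HasSum (fun p : ℕ × ℕ ↦ groebnerTerm ε A B (p.2 + (p.1 + 1)) (p.1 + 1))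
      (NormedSpace.exp (ε • (A + B)) - NormedSpace.exp (ε • A)) := by
  have hdiff := (hasSum_pow_div_factorial_smul_pow ε (A + B)).sub
    (hasSum_pow_div_factorial_smul_pow ε A)
  rw [← hasSum_nat_add_iff' 1] at hdiff
  simp only [← smul_sub, range_one, sum_singleton, pow_zero, sub_self, smul_zero,
    sub_zero] at hdiff
  have hsum := (summable_groebnerTerm_add_succ ε A B).hasSum
  have hgrouped := hsum.sum_antidiagonal
  simp only [sum_antidiagonal_groebnerTerm_add_succ] at hgrouped
  rwa [hdiff.unique hgrouped]

end Groebner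

def prodEquivSubtypeOneLeLe : ℕ × ℕ ≃ {q : ℕ × ℕ // 1 ≤ q.2 ∧ q.2 ≤ q.1} where
  toFun p := ⟨(p.2 + (p.1 + 1), p.1 + 1), by omega, by omega⟩
  invFun q := (q.1.2 - 1, q.1.1 - q.1.2)
  left_inv p := by simp
  right_inv q := by ext <;> simp <;> omega

/-- Gröbner's formula for the Lie series in a Banach algebra: the family
`(ε^k / k!) • A^{k-α} * B * (A+B)^{α-1}` (for `1 ≤ α ≤ k`) is summable, and
`exp(ε(A+B)) = exp(εA) + ∑_{α=1}^∞ ∑_{k=α}^∞ (ε^k / k!) • A^{k-α} * B * (A+B)^{α-1}`. -/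
theorem groebner_exp_decomposition
    {𝕜 : Type*} [RCLike 𝕜] {𝒜 : Type*} [NormedRing 𝒜] [NormedAlgebra 𝕜 𝒜]
    [CompleteSpace 𝒜] (A B : 𝒜) (ε : 𝕜) :
    Summable (fun p : {q : ℕ × ℕ // 1 ≤ q.2 ∧ q.2 ≤ q.1} =>
      (ε ^ p.1.1 / (Nat.factorial p.1.1 : 𝕜)) •
        (A ^ (p.1.1 - p.1.2) * B * (A + B) ^ (p.1.2 - 1))) ∧
    NormedSpace.exp (ε • (A + B)) =
      NormedSpace.exp (ε • A) +
        ∑' (α : {n : ℕ // 1 ≤ n}), ∑' (k : {k : ℕ // (α : ℕ) ≤ k}),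
          (ε ^ (k : ℕ) / (Nat.factorial (k : ℕ) : 𝕜)) •
            (A ^ ((k : ℕ) - (α : ℕ)) * B * (A + B) ^ ((α : ℕ) - 1)) := by
  have hsum := summable_groebnerTerm_add_succ ε A B
  refine ⟨prodEquivSubtypeOneLeLe.summable_iff.mp hsum, ?_⟩
  change _ = _ + ∑' α : {n : ℕ // 1 ≤ n}, ∑' k : {k : ℕ // (α : ℕ) ≤ k}, groebnerTerm ε A B k α
  calc NormedSpace.exp (ε • (A + B))
      = NormedSpace.exp (ε • A) + ∑' i, ∑' j, groebnerTerm ε A B (j + (i + 1)) (i + 1) := by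
        rw [← hsum.tsum_prod, (hasSum_groebnerTerm_add_succ ε A B).tsum_eq, add_sub_cancel]
    _ = _ := by
        rw [tsum_subtype_nat_le_eq_tsum_add
          fun n ↦ ∑' k : {k : ℕ // n ≤ k}, groebnerTerm ε A B k n]
        exact congrArg _ <| tsum_congr fun i ↦
          (tsum_subtype_nat_le_eq_tsum_add (groebnerTerm ε A B · (i + 1)) (i + 1)).symm
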